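/- Let G be a group acting on sets I and S, and suppose there exists a G-equivariant map p : S → I (i.e. p(g·s) = g·p(s) for all g, s). If the permutation representation of G on ℓ²(I) has spectral gap, then the permutation representation of G on ℓ²(S) also has spectral gap. -/

import Mathlib

/-- A unitary representation has spectral gap if some finite set of group elements uniformly
moves every vector. -/
def RepGap {G : Type*} [Group G] {H : Type*} [NormedAddCommGroup H]
    [InnerProductSpace ℂ H] [CompleteSpace H]
    (π : G →* unitary (H →L[ℂ] H)) : Prop :=
  ∃ (F : Finset G) (ε : ℝ), 0 < ε ∧
    ∀ ξ : H, ∃ g ∈ F, ε * ‖ξ‖ ≤ ‖(π g : H →L[ℂ] H) ξ - ξ‖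

/-- The permutation representation of `G` on `ℓ²(I)` associated to an action of `G` on `I`
has spectral gap. -/
def PermRepGap {G : Type*} [Group G] {I : Type*} (act : G → I → I) : Prop :=
  ∀ π : G →* unitary (lp (fun _ : I => ℂ) 2 →L[ℂ] lp (fun _ : I => ℂ) 2),
    (∀ (g : G) (ξ : lp (fun _ : I => ℂ) 2) (i : I),
        ((π g : lp (fun _ : I => ℂ) 2 →L[ℂ] lp (fun _ : I => ℂ) 2) ξ) i = ξ (act g⁻¹ i)) →
    RepGap π


/-!
Send `ξ ∈ ℓ²(S)` to its fibrewise norm `η i = ‖ξ|_{p⁻¹{i}}‖ ∈ ℓ²(I)`. This map preserves norms,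
is 1-Lipschitz (the triangle inequality in each `ℓ²(p⁻¹{i})`), and, because `p` is equivariant,
intertwines the permutation representations on `ℓ²(S)` and `ℓ²(I)`. Hence whenever `g` moves `η`
by at least `ε‖η‖`, it moves `ξ` by at least `ε‖ξ‖`.
-/

open scoped lp

noncomputable section

namespace lp

variable {α β E : Type*} [NormedAddCommGroup E]

theorem summable_norm_sq (f : ℓ²(α, E)) : Summable fun a => ‖f a‖ ^ 2 := by
  simpa using Memℓp.summable (by norm_num) (lp.memℓp f)

theorem norm_sq_eq_tsum (f : ℓ²(α, E)) : ‖f‖ ^ 2 = ∑' a, ‖f a‖ ^ 2 := by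
  simpa using lp.norm_rpow_eq_tsum (p := 2) (by norm_num) f

theorem memℓp_two_of_summable {f : α → E} (hf : Summable fun a => ‖f a‖ ^ 2) : Memℓp f 2 :=
  memℓp_gen (by simpa using hf)

def precomp (f : ℓ²(α, E)) {j : β → α} (hj : Function.Injective j) : ℓ²(β, E) :=
  ⟨f ∘ j, memℓp_two_of_summable ((summable_norm_sq f).comp_injective hj)⟩

@[simp]
theorem precomp_apply (f : ℓ²(α, E)) {j : β → α} (hj : Function.Injective j) (b : β) :
    precomp f hj b = f (j b) := rfl

theorem norm_precomp_equiv (f : ℓ²(α, E)) (e : β ≃ α) : ‖precomp f e.injective‖ = ‖f‖ := by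
  rw [← sq_eq_sq₀ (norm_nonneg _) (norm_nonneg _), norm_sq_eq_tsum, norm_sq_eq_tsum]
  exact e.tsum_eq fun a => ‖f a‖ ^ 2

variable (𝕜 : Type*) [RCLike 𝕜] [InnerProductSpace 𝕜 E]

def permHom : Equiv.Perm α →* (ℓ²(α, E) ≃ₗᵢ[𝕜] ℓ²(α, E)) where
  toFun e :=
    { toFun f := precomp f e.symm.injective
      invFun f := precomp f e.injective
      map_add' _ _ := rfl
      map_smul' _ _ := rfl
      left_inv f := by ext; simp
      right_inv f := by ext; simp
      norm_map' f := norm_precomp_equiv f e.symm }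
  map_one' := rfl
  map_mul' _ _ := rfl

end lp

section PermRep

open lp

variable (G I E 𝕜 : Type*) [Group G] [MulAction G I] [RCLike 𝕜] [NormedAddCommGroup E]
  [InnerProductSpace 𝕜 E] [CompleteSpace E]

def permRep : G →* unitary (ℓ²(I, E) →L[𝕜] ℓ²(I, E)) :=
  Unitary.linearIsometryEquiv.symm.toMonoidHom.comp ((permHom 𝕜).comp (MulAction.toPermHom G I))

variable {G I E 𝕜}

theorem permRep_apply (g : G) (f : ℓ²(I, E)) (i : I) :
    (permRep G I E 𝕜 g : ℓ²(I, E) →L[𝕜] ℓ²(I, E)) f i = f (g⁻¹ • i) := rfl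

end PermRep

section FiberNorm

open lp

variable {S I E 𝕜 : Type*} [NormedAddCommGroup E] [RCLike 𝕜] (p : S → I)

def fiberRestrict (f : ℓ²(S, E)) (i : I) : ℓ²(p ⁻¹' {i}, E) :=
  precomp f Subtype.val_injective

theorem fiberRestrict_sub (f h : ℓ²(S, E)) (i : I) :
    fiberRestrict p (f - h) i = fiberRestrict p f i - fiberRestrict p h i := rfl

theorem hasSum_norm_sq_fiberRestrict (f : ℓ²(S, E)) :
    HasSum (fun i => ‖fiberRestrict p f i‖ ^ 2) (‖f‖ ^ 2) := by
  simp only [norm_sq_eq_tsum]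
  exact (summable_norm_sq f).hasSum.tsum_fiberwise p

def fiberNorm (f : ℓ²(S, E)) : ℓ²(I, 𝕜) :=
  ⟨fun i => (‖fiberRestrict p f i‖ : 𝕜), memℓp_two_of_summable <| by
    simpa only [RCLike.norm_ofReal, sq_abs] using (hasSum_norm_sq_fiberRestrict p f).summable⟩

theorem fiberNorm_apply (f : ℓ²(S, E)) (i : I) :
    fiberNorm (𝕜 := 𝕜) p f i = (‖fiberRestrict p f i‖ : 𝕜) := rfl

theorem norm_fiberNorm (f : ℓ²(S, E)) : ‖(fiberNorm p f : ℓ²(I, 𝕜))‖ = ‖f‖ := by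
  rw [← sq_eq_sq₀ (norm_nonneg _) (norm_nonneg _), norm_sq_eq_tsum,
    ← (hasSum_norm_sq_fiberRestrict p f).tsum_eq]
  simp only [fiberNorm_apply, RCLike.norm_ofReal, sq_abs]

theorem norm_fiberNorm_sub_le (f h : ℓ²(S, E)) :
    ‖(fiberNorm p f - fiberNorm p h : ℓ²(I, 𝕜))‖ ≤ ‖f - h‖ := by
  rw [← sq_le_sq₀ (norm_nonneg _) (norm_nonneg _), norm_sq_eq_tsum,
    ← (hasSum_norm_sq_fiberRestrict p (f - h)).tsum_eq]
  have hle : ∀ i, ‖(fiberNorm p f - fiberNorm p h : ℓ²(I, 𝕜)) i‖ ^ 2 ≤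
      ‖fiberRestrict p (f - h) i‖ ^ 2 := fun i => by
    rw [lp.coeFn_sub, Pi.sub_apply, fiberNorm_apply, fiberNorm_apply, ← RCLike.ofReal_sub,
      RCLike.norm_ofReal, fiberRestrict_sub]
    exact pow_le_pow_left₀ (abs_nonneg _) (abs_norm_sub_norm_le _ _) 2
  exact (summable_norm_sq _).tsum_le_tsum hle (hasSum_norm_sq_fiberRestrict p (f - h)).summable

theorem fiberNorm_eq_permRep_fiberNorm {G : Type*} [Group G] [MulAction G S] [MulAction G I]
    (hp : ∀ (g : G) (s : S), p (g • s) = g • p s) (g : G) {f f' : ℓ²(S, E)}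
    (hf' : ∀ s, f' s = f (g⁻¹ • s)) :
    (fiberNorm p f' : ℓ²(I, 𝕜)) =
      (permRep G I 𝕜 𝕜 g : ℓ²(I, 𝕜) →L[𝕜] ℓ²(I, 𝕜)) (fiberNorm p f) := by
  ext i
  rw [permRep_apply, fiberNorm_apply, fiberNorm_apply]
  let e : p ⁻¹' {i} ≃ p ⁻¹' {g⁻¹ • i} :=
    (MulAction.toPerm g⁻¹).subtypeEquiv fun s => by simp [hp, smul_left_cancel_iff]
  have hrestrict : fiberRestrict p f' i = precomp (fiberRestrict p f (g⁻¹ • i)) e.injective := by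
    ext s
    exact hf' s
  rw [hrestrict, norm_precomp_equiv]

end FiberNorm

end

/-- Spectral gap of permutation representations transfers along `G`-equivariant maps:
if `p : S → I` is `G`-equivariant and `G ↷ ℓ²(I)` has spectral gap, then so does
`G ↷ ℓ²(S)`. -/
theorem stmt2 {G I S : Type*} [Group G] [MulAction G I] [MulAction G S]
    (p : S → I) (hp : ∀ (g : G) (s : S), p (g • s) = g • p s)
    (hgap : PermRepGap (fun (g : G) (i : I) => g • i)) :
    PermRepGap (fun (g : G) (s : S) => g • s) := by
  intro π hπ
  obtain ⟨F, ε, hε, hF⟩ := hgap (permRep G I ℂ ℂ) fun _ _ _ => rfl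
  refine ⟨F, ε, hε, fun ξ => ?_⟩
  obtain ⟨g, hg, hmove⟩ := hF (fiberNorm p ξ)
  refine ⟨g, hg, ?_⟩
  calc ε * ‖ξ‖ = ε * ‖(fiberNorm p ξ : ℓ²(I, ℂ))‖ := by rw [norm_fiberNorm]
    _ ≤ ‖(permRep G I ℂ ℂ g : ℓ²(I, ℂ) →L[ℂ] ℓ²(I, ℂ)) (fiberNorm p ξ) - fiberNorm p ξ‖ := hmove
    _ = ‖fiberNorm p ((π g : ℓ²(S, ℂ) →L[ℂ] ℓ²(S, ℂ)) ξ) - fiberNorm p ξ‖ := by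
      rw [fiberNorm_eq_permRep_fiberNorm (𝕜 := ℂ) p hp g (hπ g ξ)]
    _ ≤ ‖(π g : ℓ²(S, ℂ) →L[ℂ] ℓ²(S, ℂ)) ξ - ξ‖ := norm_fiberNorm_sub_le p _ _
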